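/- Let Ω be a bounded Lipschitz domain with boundary Γ and let ℓ ∈ L²(Γ) with ℓ > 0 a.e. on Γ, k ∈ L²(Ω), and M, h as in the elliptic setting (M uniformly elliptic bounded symmetric, h ≥ α > 0). Then there exists a unique u ∈ H¹(Ω) satisfying the Tresca variational inequality ∫_Ω M∇u·∇(v−u) + ∫_Ω u h (v−u) + ∫_Γ ℓ|v| − ∫_Γ ℓ|u| ≥ ∫_Ω k(v−u) for all v ∈ H¹(Ω); moreover u = prox_φ(F), where φ(v) := ∫_Γ ℓ|v| is the Tresca friction functional, prox is taken in the Hilbert space (H¹(Ω), ⟨·,·⟩_{M,h}), and F is the unique weak solution of the Neumann problem −div(M∇F) + F h = k in Ω, M∇F·n = 0 on Γ. -/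

import Mathlib

open MeasureTheory
open scoped RealInnerProductSpace

/-- The Tresca friction functional `φ(v) = ∫_Γ ℓ |v|` (boundary values via the trace `Tr`). -/
noncomputable def trescaFun {X : Type*} [NormedAddCommGroup X] [InnerProductSpace ℝ X]
    {Γ : Type*} [MeasurableSpace Γ] {μ : Measure Γ}
    (Tr : X →L[ℝ] Lp ℝ 2 μ) (ℓ : Lp ℝ 2 μ) (v : X) : ℝ :=
  ∫ s, (ℓ : Γ → ℝ) s * |(Tr v : Γ → ℝ) s| ∂μ

set_option linter.unusedSectionVars false

private lemma measurable_realSign : Measurable Real.sign := by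
  have h : Real.sign = fun r : ℝ => if r < 0 then (-1 : ℝ) else if 0 < r then 1 else 0 := by
    funext r; rfl
  rw [h]
  exact Measurable.ite (measurableSet_Iio (a := (0:ℝ)))
    measurable_const
    (Measurable.ite (measurableSet_Ioi (a := (0:ℝ))) measurable_const measurable_const)

private lemma realSign_mul_self (x : ℝ) : Real.sign x * x = |x| := by
  rcases lt_trichotomy x 0 with h | h | h
  · rw [Real.sign_of_neg h, abs_of_neg h]; ring
  · simp [h]
  · rw [Real.sign_of_pos h, abs_of_pos h]; ring

private lemma abs_realSign_le (x : ℝ) : |Real.sign x| ≤ 1 := by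
  rcases Real.sign_apply_eq x with h | h | h <;> rw [h] <;> norm_num

section Tresca

variable {X : Type*} [NormedAddCommGroup X] [InnerProductSpace ℝ X] [CompleteSpace X]
    {Γ : Type*} [MeasurableSpace Γ] {μ : Measure Γ}
    (Tr : X →L[ℝ] Lp ℝ 2 μ) (ℓ : Lp ℝ 2 μ)

private lemma tresca_integrable (hℓ0 : ∀ᵐ s ∂μ, 0 ≤ (ℓ : Γ → ℝ) s) (v : X) :
    Integrable (fun s => (ℓ : Γ → ℝ) s * |(Tr v : Γ → ℝ) s|) μ := by
  have h1 : Integrable (fun s => ⟪(ℓ : Γ → ℝ) s, (Tr v : Γ → ℝ) s⟫) μ :=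
    MeasureTheory.L2.integrable_inner (𝕜 := ℝ) ℓ (Tr v)
  refine h1.abs.congr ?_
  filter_upwards [hℓ0] with s hs
  simp [RCLike.inner_apply, abs_mul, abs_of_nonneg hs]
  exact mul_comm _ _

private lemma tresca_nonneg (hℓ0 : ∀ᵐ s ∂μ, 0 ≤ (ℓ : Γ → ℝ) s) (v : X) :
    0 ≤ trescaFun Tr ℓ v := by
  refine integral_nonneg_of_ae ?_
  filter_upwards [hℓ0] with s hs
  exact mul_nonneg hs (abs_nonneg _)

private lemma tresca_add_le (hℓ0 : ∀ᵐ s ∂μ, 0 ≤ (ℓ : Γ → ℝ) s) (v w : X) :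
    trescaFun Tr ℓ (v + w) ≤ trescaFun Tr ℓ v + trescaFun Tr ℓ w := by
  have hadd : ((Tr (v + w) : Lp ℝ 2 μ) : Γ → ℝ)
      =ᵐ[μ] fun s => (Tr v : Γ → ℝ) s + (Tr w : Γ → ℝ) s := by
    rw [map_add]; exact Lp.coeFn_add _ _
  unfold trescaFun
  rw [← integral_add (tresca_integrable Tr ℓ hℓ0 v) (tresca_integrable Tr ℓ hℓ0 w)]
  refine integral_mono_ae (tresca_integrable Tr ℓ hℓ0 (v + w)) ?_ ?_
  · exact (tresca_integrable Tr ℓ hℓ0 v).add (tresca_integrable Tr ℓ hℓ0 w)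
  · filter_upwards [hadd, hℓ0] with s hs hs0
    rw [hs]
    calc (ℓ : Γ → ℝ) s * |(Tr v : Γ → ℝ) s + (Tr w : Γ → ℝ) s|
        ≤ (ℓ : Γ → ℝ) s * (|(Tr v : Γ → ℝ) s| + |(Tr w : Γ → ℝ) s|) :=
          mul_le_mul_of_nonneg_left (abs_add_le _ _) hs0
      _ = _ := by ring

private lemma tresca_smul (c : ℝ) (v : X) :
    trescaFun Tr ℓ (c • v) = |c| * trescaFun Tr ℓ v := by
  have hsmul : ((Tr (c • v) : Lp ℝ 2 μ) : Γ → ℝ)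
      =ᵐ[μ] fun s => c * (Tr v : Γ → ℝ) s := by
    rw [_root_.map_smul]; exact Lp.coeFn_smul c (Tr v)
  unfold trescaFun
  rw [← integral_const_mul]
  refine integral_congr_ae ?_
  filter_upwards [hsmul] with s hs
  rw [hs, abs_mul]; ring

private lemma tresca_convex (hℓ0 : ∀ᵐ s ∂μ, 0 ≤ (ℓ : Γ → ℝ) s) (u v : X) {t : ℝ}
    (ht0 : 0 ≤ t) (ht1 : t ≤ 1) :
    trescaFun Tr ℓ (u + t • (v - u)) ≤ (1 - t) * trescaFun Tr ℓ u + t * trescaFun Tr ℓ v := by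
  have he : u + t • (v - u) = (1 - t) • u + t • v := by
    rw [smul_sub, sub_smul, one_smul]; abel
  rw [he]
  calc trescaFun Tr ℓ ((1 - t) • u + t • v)
      ≤ trescaFun Tr ℓ ((1 - t) • u) + trescaFun Tr ℓ (t • v) := tresca_add_le Tr ℓ hℓ0 _ _
    _ = (1 - t) * trescaFun Tr ℓ u + t * trescaFun Tr ℓ v := by
        rw [tresca_smul, tresca_smul, abs_of_nonneg ht0, abs_of_nonneg (by linarith : (0:ℝ) ≤ 1 - t)]

/-- Every continuous linear functional dominated by `φ` bounds `φ` from below at no point;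
a Riesz element `w` with `⟪w, v⟫ ≤ φ v` for all `v` and `⟪w, u⟫ = φ u`. -/
private lemma tresca_subgrad (hℓ0 : ∀ᵐ s ∂μ, 0 ≤ (ℓ : Γ → ℝ) s) (u : X) :
    ∃ w : X, (∀ v : X, ⟪w, v⟫ ≤ trescaFun Tr ℓ v) ∧ ⟪w, u⟫ = trescaFun Tr ℓ u := by
  -- the sign function q = ℓ · sign(Tr u) as an L² element
  set qf : Γ → ℝ := fun s => (ℓ : Γ → ℝ) s * Real.sign ((Tr u : Γ → ℝ) s) with hqf
  have hqmeas : AEStronglyMeasurable qf μ := by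
    refine (Lp.aestronglyMeasurable ℓ).mul ?_
    exact (measurable_realSign.comp_aemeasurable
      (Lp.aestronglyMeasurable (Tr u)).aemeasurable).aestronglyMeasurable
  have hqle : ∀ᵐ s ∂μ, ‖qf s‖ ≤ ‖(ℓ : Γ → ℝ) s‖ := by
    filter_upwards with s
    rw [hqf]
    simp only [Real.norm_eq_abs, abs_mul]
    calc |(ℓ : Γ → ℝ) s| * |Real.sign ((Tr u : Γ → ℝ) s)| ≤ |(ℓ : Γ → ℝ) s| * 1 :=
      mul_le_mul_of_nonneg_left (abs_realSign_le _) (abs_nonneg _)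
    _ = _ := mul_one _
  have hqmem : MemLp qf 2 μ := (Lp.memLp ℓ).of_le hqmeas hqle
  set q : Lp ℝ 2 μ := hqmem.toLp qf with hq
  have hqcoe : (q : Γ → ℝ) =ᵐ[μ] qf := hqmem.coeFn_toLp
  have habs : ∀ᵐ s ∂μ, |(q : Γ → ℝ) s| ≤ (ℓ : Γ → ℝ) s := by
    filter_upwards [hqcoe, hℓ0] with s hs hs0
    rw [hs, hqf]
    simp only [abs_mul, abs_of_nonneg hs0]
    calc (ℓ : Γ → ℝ) s * |Real.sign ((Tr u : Γ → ℝ) s)| ≤ (ℓ : Γ → ℝ) s * 1 :=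
      mul_le_mul_of_nonneg_left (abs_realSign_le _) hs0
    _ = _ := mul_one _
  -- the Riesz representative of v ↦ ⟪q, Tr v⟫
  refine ⟨(InnerProductSpace.toDual ℝ X).symm ((innerSL ℝ q).comp Tr), ?_, ?_⟩
  · intro v
    rw [InnerProductSpace.toDual_symm_apply]
    have : ((innerSL ℝ q).comp Tr) v = ⟪q, Tr v⟫ := rfl
    rw [this, MeasureTheory.L2.inner_def]
    refine integral_mono_ae (MeasureTheory.L2.integrable_inner (𝕜 := ℝ) q (Tr v))
      (tresca_integrable Tr ℓ hℓ0 v) ?_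
    filter_upwards [habs] with s hs
    simp only [RCLike.inner_apply, conj_trivial]
    calc (Tr v : Γ → ℝ) s * (q : Γ → ℝ) s = (q : Γ → ℝ) s * (Tr v : Γ → ℝ) s := mul_comm _ _
      _ ≤ |(q : Γ → ℝ) s * (Tr v : Γ → ℝ) s| := le_abs_self _
      _ = |(q : Γ → ℝ) s| * |(Tr v : Γ → ℝ) s| := abs_mul _ _
      _ ≤ (ℓ : Γ → ℝ) s * |(Tr v : Γ → ℝ) s| :=
          mul_le_mul_of_nonneg_right hs (abs_nonneg _)
  · rw [InnerProductSpace.toDual_symm_apply]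
    have : ((innerSL ℝ q).comp Tr) u = ⟪q, Tr u⟫ := rfl
    rw [this, MeasureTheory.L2.inner_def]
    refine integral_congr_ae ?_
    filter_upwards [hqcoe] with s hs
    simp only [RCLike.inner_apply, conj_trivial]
    rw [hs, hqf, mul_comm, mul_assoc, realSign_mul_self]


private lemma VI_iff_min (hℓ0 : ∀ᵐ s ∂μ, 0 ≤ (ℓ : Γ → ℝ) s) (F u : X) :
    (∀ v : X, ⟪F, v - u⟫ ≤ ⟪u, v - u⟫ + trescaFun Tr ℓ v - trescaFun Tr ℓ u) ↔
    (∀ y : X, trescaFun Tr ℓ u + ‖u - F‖ ^ 2 / 2 ≤ trescaFun Tr ℓ y + ‖y - F‖ ^ 2 / 2) := by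
  constructor
  · intro h y
    have hy := h y
    have h1 : 0 ≤ ⟪u - F, y - u⟫ + trescaFun Tr ℓ y - trescaFun Tr ℓ u := by
      rw [inner_sub_left]; linarith
    have h2 : ‖y - F‖ ^ 2 = ‖u - F‖ ^ 2 + 2 * ⟪u - F, y - u⟫ + ‖y - u‖ ^ 2 := by
      have : y - F = (u - F) + (y - u) := by abel
      rw [this, norm_add_sq_real]
    nlinarith [sq_nonneg ‖y - u‖]
  · intro h v
    set A := trescaFun Tr ℓ v - trescaFun Tr ℓ u + ⟪u - F, v - u⟫ with hA
    have key : ∀ t : ℝ, 0 < t → t ≤ 1 → 0 ≤ A + t * (‖v - u‖ ^ 2 / 2) := by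
      intro t ht0 ht1
      have hy := h (u + t • (v - u))
      have hφ := tresca_convex Tr ℓ hℓ0 u v ht0.le ht1
      have hnorm : ‖u + t • (v - u) - F‖ ^ 2
          = ‖u - F‖ ^ 2 + 2 * (t * ⟪u - F, v - u⟫) + t ^ 2 * ‖v - u‖ ^ 2 := by
        have he : u + t • (v - u) - F = (u - F) + t • (v - u) := by abel
        rw [he, norm_add_sq_real, real_inner_smul_right, norm_smul]
        simp [Real.norm_eq_abs, abs_of_pos ht0, mul_pow]
      have h0 : 0 ≤ t * (trescaFun Tr ℓ v - trescaFun Tr ℓ u)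
          + t * ⟪u - F, v - u⟫ + t ^ 2 * (‖v - u‖ ^ 2 / 2) := by nlinarith
      rw [hA]
      nlinarith
    have hA0 : 0 ≤ A := by
      by_contra hA'
      push_neg at hA'
      set c := ‖v - u‖ ^ 2 / 2 with hc
      have hc0 : 0 ≤ c := by positivity
      set t := min 1 ((-A) / (2 * (c + 1))) with ht
      have htpos : 0 < t := lt_min one_pos (div_pos (by linarith) (by positivity))
      have ht1 : t ≤ 1 := min_le_left _ _
      have htle : t ≤ (-A) / (2 * (c + 1)) := min_le_right _ _
      have := key t htpos ht1
      have htc : t * c ≤ (-A) / 2 := by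
        calc t * c ≤ ((-A) / (2 * (c + 1))) * c := by nlinarith
          _ ≤ (-A) / 2 := by
            rw [div_mul_eq_mul_div, div_le_div_iff₀ (by positivity) (by norm_num)]
            nlinarith
      linarith
    rw [hA, inner_sub_left] at hA0
    linarith

private lemma VI_exists (hℓ0 : ∀ᵐ s ∂μ, 0 ≤ (ℓ : Γ → ℝ) s) (F : X) :
    ∃ u : X, ∀ v : X, ⟪F, v - u⟫ ≤ ⟪u, v - u⟫ + trescaFun Tr ℓ v - trescaFun Tr ℓ u := by
  set C : Set X := {w : X | ∀ v : X, ⟪w, v⟫ ≤ trescaFun Tr ℓ v} with hC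
  have hC0 : (0 : X) ∈ C := by
    intro v
    rw [inner_zero_left]
    exact tresca_nonneg Tr ℓ hℓ0 v
  have hconv : Convex ℝ C := by
    intro w1 h1 w2 h2 a b ha hb hab
    intro v
    rw [inner_add_left, real_inner_smul_left, real_inner_smul_left]
    calc a * ⟪w1, v⟫ + b * ⟪w2, v⟫
        ≤ a * trescaFun Tr ℓ v + b * trescaFun Tr ℓ v := by
          gcongr <;> [exact h1 v; exact h2 v]
      _ = trescaFun Tr ℓ v := by rw [← add_mul, hab, one_mul]
  have hclosed : IsClosed C := by
    have : C = ⋂ v : X, {w : X | ⟪w, v⟫ ≤ trescaFun Tr ℓ v} := by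
      ext w; simp [hC, Set.mem_iInter]
    rw [this]
    exact isClosed_iInter fun v =>
      isClosed_le (Continuous.inner continuous_id continuous_const) continuous_const
  obtain ⟨p, hpC, hmin⟩ :=
    exists_norm_eq_iInf_of_complete_convex ⟨0, hC0⟩ hclosed.isComplete hconv F
  have hproj : ∀ w ∈ C, ⟪F - p, w - p⟫ ≤ 0 :=
    (norm_eq_iInf_iff_real_inner_le_zero hconv hpC).mp hmin
  refine ⟨F - p, ?_⟩
  obtain ⟨w, hwC, hwu⟩ := tresca_subgrad Tr ℓ hℓ0 (F - p)
  have hle : trescaFun Tr ℓ (F - p) ≤ ⟪p, F - p⟫ := by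
    have h1 := hproj w hwC
    rw [inner_sub_right] at h1
    have h2 : ⟪F - p, w⟫ = trescaFun Tr ℓ (F - p) := by rw [real_inner_comm]; exact hwu
    have h3 : ⟪F - p, p⟫ = ⟪p, F - p⟫ := real_inner_comm _ _
    linarith
  have hge : ⟪p, F - p⟫ ≤ trescaFun Tr ℓ (F - p) := hpC (F - p)
  have heq : ⟪p, F - p⟫ = trescaFun Tr ℓ (F - p) := le_antisymm hge hle
  intro v
  have hFdec : ⟪F, v - (F - p)⟫ = ⟪F - p, v - (F - p)⟫ + ⟪p, v - (F - p)⟫ := by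
    rw [← inner_add_left]; norm_num
  have hpdec : ⟪p, v - (F - p)⟫ = ⟪p, v⟫ - ⟪p, F - p⟫ := inner_sub_right _ _ _
  have hpv : ⟪p, v⟫ ≤ trescaFun Tr ℓ v := hpC v
  linarith

private lemma VI_unique (F : X) {u1 u2 : X}
    (h1 : ∀ v : X, ⟪F, v - u1⟫ ≤ ⟪u1, v - u1⟫ + trescaFun Tr ℓ v - trescaFun Tr ℓ u1)
    (h2 : ∀ v : X, ⟪F, v - u2⟫ ≤ ⟪u2, v - u2⟫ + trescaFun Tr ℓ v - trescaFun Tr ℓ u2) :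
    u1 = u2 := by
  have ha := h1 u2
  have hb := h2 u1
  have e1 : ⟪F, u2 - u1⟫ + ⟪F, u1 - u2⟫ = 0 := by
    rw [inner_sub_right, inner_sub_right]; ring
  have e2 : ⟪u1, u2 - u1⟫ + ⟪u2, u1 - u2⟫ = -⟪u1 - u2, u1 - u2⟫ := by
    simp only [inner_sub_left, inner_sub_right]
    rw [real_inner_comm u2 u1]; ring
  have e3 : ⟪u1 - u2, u1 - u2⟫ = ‖u1 - u2‖ ^ 2 := real_inner_self_eq_norm_sq _
  have : ‖u1 - u2‖ ^ 2 ≤ 0 := by linarith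
  have : ‖u1 - u2‖ = 0 := by nlinarith [norm_nonneg (u1 - u2)]
  rwa [norm_sub_eq_zero_iff] at this

end Tresca

/-- The scalar Tresca friction problem, abstract form.  `X` plays the role of `H¹(Ω)` endowed
with the scalar product `⟨·,·⟩_{M,h} = ∫ M∇·∇· + ∫ ··h` (taken as the inner product of `X`),
`Tr` is the trace onto `L²(Γ)` and `T0` the inclusion into `L²(Ω)`.  For `ℓ > 0` a.e. on `Γ`
and `k ∈ L²(Ω)`, the Tresca variational inequality has a unique solution `u`, and for the
unique weak solution `F` of the homogeneous Neumann problem (`⟨F, v⟩ = ∫ k v` for all `v`), the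
solutions of the variational inequality are exactly the proximal points `prox_φ(F)` of the
Tresca friction functional `φ(v) = ∫_Γ ℓ|v|`. -/
theorem stmt_10 {X Z : Type*} [NormedAddCommGroup X] [InnerProductSpace ℝ X] [CompleteSpace X]
    [NormedAddCommGroup Z] [InnerProductSpace ℝ Z]
    {Γ : Type*} [MeasurableSpace Γ] (μ : Measure Γ)
    (Tr : X →L[ℝ] Lp ℝ 2 μ) (T0 : X →L[ℝ] Z)
    (ℓ : Lp ℝ 2 μ) (hℓ : ∀ᵐ s ∂μ, 0 < (ℓ : Γ → ℝ) s) (k : Z) :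
    (∃! u : X, ∀ v : X,
      ⟪k, T0 (v - u)⟫ ≤ ⟪u, v - u⟫ + trescaFun Tr ℓ v - trescaFun Tr ℓ u) ∧
    (∀ F : X, (∀ v : X, ⟪F, v⟫ = ⟪k, T0 v⟫) →
      ∀ u : X,
        (∀ v : X, ⟪k, T0 (v - u)⟫ ≤ ⟪u, v - u⟫ + trescaFun Tr ℓ v - trescaFun Tr ℓ u) ↔
        (∀ y : X, trescaFun Tr ℓ u + ‖u - F‖ ^ 2 / 2 ≤ trescaFun Tr ℓ y + ‖y - F‖ ^ 2 / 2)) := by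
  have hℓ0 : ∀ᵐ s ∂μ, 0 ≤ (ℓ : Γ → ℝ) s := hℓ.mono fun s h => h.le
  set F₀ : X := (InnerProductSpace.toDual ℝ X).symm ((innerSL ℝ k).comp T0) with hF₀def
  have hF₀ : ∀ x : X, ⟪F₀, x⟫ = ⟪k, T0 x⟫ := fun x => by
    rw [hF₀def, InnerProductSpace.toDual_symm_apply]; rfl
  constructor
  · obtain ⟨u, hu⟩ := VI_exists Tr ℓ hℓ0 F₀
    refine ⟨u, fun v => by rw [← hF₀]; exact hu v, fun u' hu' => ?_⟩
    exact VI_unique Tr ℓ F₀ (fun v => by rw [hF₀]; exact hu' v) hu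
  · intro F hF u
    have hiff := VI_iff_min Tr ℓ hℓ0 F u
    constructor
    · intro h
      exact hiff.mp fun v => by rw [hF]; exact h v
    · intro h v
      rw [← hF]
      exact hiff.mpr h v
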